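/- Let m ≥ 1, 1 ≤ i ≤ m, and e ≥ 1. Then in Q_m: if e ≤ i, the power x_i^e equals the product x_{i−e+1} x_{i−e+2} ⋯ x_i, and if e > i, then x_i^e = 0. -/

import Mathlib

open MvPolynomial Finset
open scoped Fin.NatCast

noncomputable section

/-- The defining ideal of `Q_m`: generated by `x_1^2` and `x_i^2 - x_{i-1} x_i` for `2 ≤ i ≤ m`
(variables are 1-based; `X ((i-1 : ℕ) : Fin m)` is `x_i`). -/
def Qrel (m : ℕ) [NeZero m] : Ideal (MvPolynomial (Fin m) (ZMod 2)) :=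
  Ideal.span ((fun i : ℕ =>
      X ((i - 1 : ℕ) : Fin m) ^ 2 -
        (if i = 1 then 0 else X ((i - 2 : ℕ) : Fin m) * X ((i - 1 : ℕ) : Fin m))) ''
    Set.Icc 1 m)

/-- The ring `Q_m`. -/
abbrev Qring (m : ℕ) [NeZero m] : Type :=
  MvPolynomial (Fin m) (ZMod 2) ⧸ Qrel m

/-- The image of `x_i` (1-based, for `1 ≤ i ≤ m`) in `Q_m`. -/
def xQ (m : ℕ) [NeZero m] (i : ℕ) : Qring m :=
  Ideal.Quotient.mk (Qrel m) (X ((i - 1 : ℕ) : Fin m))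

/-! From `x_i^2 = x_{i-1} x_i` one gets `x_i^(d+1) = x_{i-1}^d x_i`, which lowers the index by one
and the exponent by one at the cost of a factor `x_i`. Iterating down to `x_1`, whose square
vanishes, gives the product `x_{i-e+1} ⋯ x_i` when `e ≤ i` and zero otherwise. -/

theorem pow_succ_eq_pow_mul_of_sq_eq_mul {M : Type*} [CommMonoid M] {a b : M}
    (h : b ^ 2 = a * b) (n : ℕ) : b ^ (n + 1) = a ^ n * b := by
  induction n with
  | zero => simp
  | succ n ih =>
    calc b ^ (n + 2) = b ^ (n + 1) * b := pow_succ b (n + 1)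
      _ = a ^ n * b ^ 2 := by rw [ih, mul_assoc, sq]
      _ = a ^ (n + 1) * b := by rw [h, pow_succ, mul_assoc]

section

variable {m : ℕ} [NeZero m]

theorem xQ_sq {j : ℕ} (hj1 : 1 ≤ j) (hjm : j ≤ m) :
    xQ m j ^ 2 = if j = 1 then 0 else xQ m (j - 1) * xQ m j := by
  have hrel := (Ideal.Quotient.eq (I := Qrel m)).mpr (Ideal.subset_span ⟨j, ⟨hj1, hjm⟩, rfl⟩ :
    X ((j - 1 : ℕ) : Fin m) ^ 2 -
      (if j = 1 then 0 else X ((j - 2 : ℕ) : Fin m) * X ((j - 1 : ℕ) : Fin m)) ∈ Qrel m)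
  rw [map_pow] at hrel
  split_ifs at hrel ⊢
  · rw [xQ, hrel, map_zero]
  · rw [xQ, xQ, Nat.sub_sub, hrel, map_mul]

theorem xQ_one_sq : xQ m 1 ^ 2 = 0 := by
  simpa using xQ_sq le_rfl (NeZero.one_le : 1 ≤ m)

theorem xQ_succ_sq {i : ℕ} (hi : 1 ≤ i) (him : i + 1 ≤ m) :
    xQ m (i + 1) ^ 2 = xQ m i * xQ m (i + 1) := by
  simpa [Nat.one_le_iff_ne_zero.mp hi] using xQ_sq (m := m) (j := i + 1) (by omega) him

theorem xQ_pow_eq_ite {i : ℕ} (hi1 : 1 ≤ i) (him : i ≤ m) (e : ℕ) :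
    xQ m i ^ e = if e ≤ i then ∏ k ∈ Icc (i - e + 1) i, xQ m k else 0 := by
  induction i, hi1 using Nat.le_induction generalizing e with
  | base =>
    match e with
    | 0 => simp
    | 1 => simp
    | d + 2 => rw [pow_add, xQ_one_sq, mul_zero, if_neg (by omega)]
  | succ i hi ih =>
    rcases e with _ | d
    · simp
    rw [pow_succ_eq_pow_mul_of_sq_eq_mul (xQ_succ_sq hi him) d, ih (by omega) d]
    split_ifs
    · rw [prod_Icc_succ_top (by omega), show i + 1 - (d + 1) + 1 = i - d + 1 by omega]
    · omega
    · omega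
    · rw [zero_mul]

end

theorem statement6_general (m : ℕ) [NeZero m] (i e : ℕ)
    (hi1 : 1 ≤ i) (him : i ≤ m) :
    (e ≤ i → xQ m i ^ e = ∏ k ∈ Finset.Icc (i - e + 1) i, xQ m k) ∧
    (i < e → xQ m i ^ e = 0) := by
  rw [xQ_pow_eq_ite hi1 him e]
  exact ⟨fun he => if_pos he, fun he => if_neg (by omega)⟩

/-- Equation (2.3): in `Q_m`, for `1 ≤ i ≤ m` and `e ≥ 1`:
`x_i^e = x_{i-e+1} x_{i-e+2} ⋯ x_i` if `e ≤ i`, and `x_i^e = 0` if `e > i`. -/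
theorem statement6 (m : ℕ) [NeZero m] (hm : 1 ≤ m) (i e : ℕ)
    (hi1 : 1 ≤ i) (him : i ≤ m) (he : 1 ≤ e) :
    (e ≤ i → xQ m i ^ e = ∏ k ∈ Finset.Icc (i - e + 1) i, xQ m k) ∧
    (i < e → xQ m i ^ e = 0) :=
  statement6_general m i e hi1 him
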